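/- arXiv:2302.10184 — 2 statements merged into one kernel-verified Lean document; each statement's English description precedes it below -/
import Mathlib

section
/- Let d be a positive integer, let W be a real d×d matrix with spectral norm ‖W‖₂, and let A be a real d×d diagonal matrix each of whose diagonal entries is 0 or 1. Define f : ℝᵈ → ℝᵈ by f(x) = A·W·x. Let Q : ℝᵈ → ℝᵈ be continuously differentiable, and suppose there exist q ≥ 0 and r ≥ 0 such that for all x ∈ ℝᵈ: (i) every component of Q(f(x)) has absolute value at most q, and (ii) the linear map h ↦ f(x) ⊙ (D(Q∘f)(x)·h) has operator norm (with respect to the Euclidean norm) at most r·‖W‖₂, where ⊙ denotes componentwise multiplication and D(Q∘f)(x) is the Fréchet derivative of Q∘f at x. Then for all x, y ∈ ℝᵈ, ‖(y + f(y) ⊙ Q(f(y))) − (x + f(x) ⊙ Q(f(x)))‖₂ ≤ (1 + (q + r)·‖W‖₂)·‖y − x‖₂. -/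
/-! By the product rule for the bilinear Hadamard product, the layer `x ↦ x + f x ⊙ Q (f x)` has
derivative `h ↦ h + f x ⊙ D(Q ∘ f)(x) h + f h ⊙ Q (f x)`. The three terms are bounded by `‖h‖`,
`r ‖W‖₂ ‖h‖` and `q ‖f‖ ‖h‖ ≤ q ‖W‖₂ ‖h‖` (a `0/1` diagonal matrix has spectral norm at most `1`),
and the mean value inequality turns this derivative bound into the Lipschitz bound. -/

open scoped Matrix

/-- Componentwise (Hadamard) product of two vectors in Euclidean space. -/
noncomputable def hadamardVec {d : ℕ} (x y : EuclideanSpace ℝ (Fin d)) :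
    EuclideanSpace ℝ (Fin d) :=
  (WithLp.equiv 2 (Fin d → ℝ)).symm fun i => x i * y i

open scoped Matrix.Norms.L2Operator in
lemma Matrix.norm_toEuclideanCLM_diagonal_mul_le {𝕜 n : Type*} [RCLike 𝕜] [Fintype n]
    [DecidableEq n] (a : n → 𝕜) (ha : ∀ i, ‖a i‖ ≤ 1) (W : Matrix n n 𝕜) :
    ‖toEuclideanCLM (𝕜 := 𝕜) (diagonal a * W)‖ ≤ ‖toEuclideanCLM (𝕜 := 𝕜) W‖ :=
  calc ‖diagonal a * W‖ ≤ ‖diagonal a‖ * ‖W‖ := l2_opNorm_mul _ _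
    _ ≤ 1 * ‖W‖ := by
      gcongr
      rw [l2_opNorm_diagonal]
      exact pi_norm_le_iff_of_nonneg zero_le_one |>.mpr ha
    _ = ‖W‖ := one_mul _

section Hadamard

variable {d : ℕ}

@[simp]
lemma hadamardVec_apply (u v : EuclideanSpace ℝ (Fin d)) (i : Fin d) :
    hadamardVec u v i = u i * v i := rfl

lemma norm_hadamardVec_le_mul_norm (u v : EuclideanSpace ℝ (Fin d)) {c : ℝ} (hc : 0 ≤ c)
    (hv : ∀ i, |v i| ≤ c) : ‖hadamardVec u v‖ ≤ c * ‖u‖ := by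
  refine (sq_le_sq₀ (norm_nonneg _) (by positivity)).mp ?_
  simp only [EuclideanSpace.norm_sq_eq, hadamardVec_apply, mul_pow, Finset.mul_sum,
    Real.norm_eq_abs, abs_mul]
  refine Finset.sum_le_sum fun i _ => ?_
  rw [mul_comm (c ^ 2)]
  gcongr
  exact hv i

lemma norm_hadamardVec_le (u v : EuclideanSpace ℝ (Fin d)) :
    ‖hadamardVec u v‖ ≤ ‖u‖ * ‖v‖ := by
  rw [mul_comm]
  exact norm_hadamardVec_le_mul_norm u v (norm_nonneg v) fun i => PiLp.norm_apply_le v i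

noncomputable def hadamardCLM :
    EuclideanSpace ℝ (Fin d) →L[ℝ] EuclideanSpace ℝ (Fin d) →L[ℝ] EuclideanSpace ℝ (Fin d) :=
  LinearMap.mkContinuous₂
    (LinearMap.mk₂ ℝ hadamardVec
      (fun _ _ _ => by ext; simp [add_mul])
      (fun _ _ _ => by ext; simp [mul_assoc])
      (fun _ _ _ => by ext; simp [mul_add])
      (fun _ _ _ => by ext; simp [mul_left_comm]))
    1 fun u v => by simpa [one_mul] using norm_hadamardVec_le u v

end Hadamard

section Residual

variable {d : ℕ} {L : EuclideanSpace ℝ (Fin d) →L[ℝ] EuclideanSpace ℝ (Fin d)}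
  {P : EuclideanSpace ℝ (Fin d) → EuclideanSpace ℝ (Fin d)} {z : EuclideanSpace ℝ (Fin d)}

lemma hasFDerivAt_add_hadamardVec (hP : DifferentiableAt ℝ P z) :
    HasFDerivAt (fun w => w + hadamardVec (L w) (P w))
      (ContinuousLinearMap.id ℝ _ +
        (hadamardCLM.precompR _ (L z) (fderiv ℝ P z) + hadamardCLM.precompL _ L (P z))) z :=
  (hasFDerivAt_id z).add (hadamardCLM.hasFDerivAt_of_bilinear L.hasFDerivAt hP.hasFDerivAt)

lemma norm_fderiv_add_hadamardVec_le {M q r : ℝ} (hP : DifferentiableAt ℝ P z) (hL : ‖L‖ ≤ M)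
    (hq : 0 ≤ q) (hr : 0 ≤ r) (hbound : ∀ i, |P z i| ≤ q)
    (hderiv : ∀ h, ‖hadamardVec (L z) (fderiv ℝ P z h)‖ ≤ r * M * ‖h‖) :
    ‖fderiv ℝ (fun w => w + hadamardVec (L w) (P w)) z‖ ≤ 1 + (q + r) * M := by
  have hM : 0 ≤ M := (norm_nonneg L).trans hL
  rw [(hasFDerivAt_add_hadamardVec hP).fderiv]
  refine ContinuousLinearMap.opNorm_le_bound _ (by positivity) fun h => ?_
  have hLh : ‖hadamardVec (L h) (P z)‖ ≤ q * (M * ‖h‖) :=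
    (norm_hadamardVec_le_mul_norm _ _ hq hbound).trans (by gcongr; exact L.le_of_opNorm_le hL h)
  calc ‖h + (hadamardVec (L z) (fderiv ℝ P z h) + hadamardVec (L h) (P z))‖
      ≤ ‖h‖ + (‖hadamardVec (L z) (fderiv ℝ P z h)‖ + ‖hadamardVec (L h) (P z)‖) :=
        (norm_add_le _ _).trans (by gcongr; exact norm_add_le _ _)
    _ ≤ ‖h‖ + (r * M * ‖h‖ + q * (M * ‖h‖)) := by gcongr; exact hderiv h
    _ = (1 + (q + r) * M) * ‖h‖ := by ring

end Residual

theorem attention_noise_regulator_general (d : ℕ)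
    (W : Matrix (Fin d) (Fin d) ℝ)
    (a : Fin d → ℝ) (ha : ∀ i, a i = 0 ∨ a i = 1)
    (f : EuclideanSpace ℝ (Fin d) → EuclideanSpace ℝ (Fin d))
    (hfdef : ∀ x, f x =
      Matrix.toEuclideanCLM (𝕜 := ℝ) (Matrix.diagonal a * W) x)
    (Q : EuclideanSpace ℝ (Fin d) → EuclideanSpace ℝ (Fin d))
    (hQsmooth : ContDiff ℝ 1 Q)
    (q r : ℝ) (hq : 0 ≤ q) (hr : 0 ≤ r)
    (hbound : ∀ (x : EuclideanSpace ℝ (Fin d)) (i : Fin d), |Q (f x) i| ≤ q)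
    (hderiv : ∀ (x h : EuclideanSpace ℝ (Fin d)),
      ‖hadamardVec (f x) (fderiv ℝ (Q ∘ f) x h)‖ ≤
        r * ‖Matrix.toEuclideanCLM (𝕜 := ℝ) W‖ * ‖h‖) :
    ∀ x y : EuclideanSpace ℝ (Fin d),
      ‖(y + hadamardVec (f y) (Q (f y))) - (x + hadamardVec (f x) (Q (f x)))‖ ≤
        (1 + (q + r) * ‖Matrix.toEuclideanCLM (𝕜 := ℝ) W‖) * ‖y - x‖ := by
  intro x y
  set L := Matrix.toEuclideanCLM (𝕜 := ℝ) (Matrix.diagonal a * W)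
  obtain rfl : f = L := funext hfdef
  have hL : ‖L‖ ≤ ‖Matrix.toEuclideanCLM (𝕜 := ℝ) W‖ :=
    Matrix.norm_toEuclideanCLM_diagonal_mul_le a
      (fun i => by rcases ha i with h | h <;> simp [h]) W
  have hQf : Differentiable ℝ (Q ∘ L) :=
    (hQsmooth.differentiable one_ne_zero).comp (ContinuousLinearMap.differentiable _)
  exact convex_univ.norm_image_sub_le_of_norm_fderiv_le
    (fun z _ => (hasFDerivAt_add_hadamardVec (hQf z)).differentiableAt)
    (fun z _ => norm_fderiv_add_hadamardVec_le (hQf z) hL hq hr (hbound z) (hderiv z))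
    (Set.mem_univ x) (Set.mem_univ y)

/-- Theorem 1 of the paper (self-attention as a noise regulator, one residual
block): with `f(x) = A·W·x` (`A` diagonal with `0/1` entries) and a `C¹`
self-attention map `Q` such that every component of `Q(f(x))` is bounded by `q`
and the linear map `h ↦ f(x) ⊙ D(Q∘f)(x)·h` has Euclidean operator norm at most
`r·‖W‖₂`, the residual layer `x ↦ x + f(x) ⊙ Q(f(x))` is Lipschitz with
constant `1 + (q + r)·‖W‖₂`. -/
theorem attention_noise_regulator (d : ℕ) (hd : 0 < d)
    (W : Matrix (Fin d) (Fin d) ℝ)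
    (a : Fin d → ℝ) (ha : ∀ i, a i = 0 ∨ a i = 1)
    (f : EuclideanSpace ℝ (Fin d) → EuclideanSpace ℝ (Fin d))
    (hfdef : ∀ x, f x =
      Matrix.toEuclideanCLM (𝕜 := ℝ) (Matrix.diagonal a * W) x)
    (Q : EuclideanSpace ℝ (Fin d) → EuclideanSpace ℝ (Fin d))
    (hQsmooth : ContDiff ℝ 1 Q)
    (q r : ℝ) (hq : 0 ≤ q) (hr : 0 ≤ r)
    (hbound : ∀ (x : EuclideanSpace ℝ (Fin d)) (i : Fin d), |Q (f x) i| ≤ q)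
    (hderiv : ∀ (x h : EuclideanSpace ℝ (Fin d)),
      ‖hadamardVec (f x) (fderiv ℝ (Q ∘ f) x h)‖ ≤
        r * ‖Matrix.toEuclideanCLM (𝕜 := ℝ) W‖ * ‖h‖) :
    ∀ x y : EuclideanSpace ℝ (Fin d),
      ‖(y + hadamardVec (f y) (Q (f y))) - (x + hadamardVec (f x) (Q (f x)))‖ ≤
        (1 + (q + r) * ‖Matrix.toEuclideanCLM (𝕜 := ℝ) W‖) * ‖y - x‖ :=
  attention_noise_regulator_general d W a ha f hfdef Q hQsmooth q r hq hr hbound hderiv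
end

section
/- Let T > 0, let N and k be positive integers, set Δt = T/(Nk), let L > 0 and L_att > 0, and set w = 1 + kΔt·L·(1 + L_att). Let (E_n)_{n=0}^{N} be nonnegative reals with E₀ = 0 and let V₀,…,V_{N−1} be reals such that E_{n+1} ≤ w·E_n + kΔt·|V_n| for all 0 ≤ n ≤ N−1. Set δ = (1/N)·Σ_{n=0}^{N−1} V_n². Then E_N ≤ (√T·exp(TL(1+L_att))/√(L(1+L_att)))·√δ. -/
/-- Culminating estimate on the accumulated error in the proof of Theorem 2:
if `E₀ = 0` and `E_{n+1} ≤ w·E_n + kΔt·|V_n|` with `w = 1 + kΔt·L(1+L_att)` and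
`Δt = T/(Nk)`, then `E_N ≤ (√T·exp(TL(1+L_att))/√(L(1+L_att)))·√δ`, where
`δ = (1/N)·Σ_{n<N} V_n²`. -/
theorem attsolver_accumulated_error (T : ℝ) (hT : 0 < T) (N k : ℕ)
    (hN : 0 < N) (hk : 0 < k) (L Latt : ℝ) (hL : 0 < L) (hLatt : 0 < Latt)
    (E : ℕ → ℝ) (V : ℕ → ℝ)
    (hEnonneg : ∀ n ≤ N, 0 ≤ E n) (hE0 : E 0 = 0)
    (hrec : ∀ n < N,
      E (n + 1) ≤ (1 + k * (T / (N * k)) * L * (1 + Latt)) * E n +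
        k * (T / (N * k)) * |V n|) :
    E N ≤ (Real.sqrt T * Real.exp (T * L * (1 + Latt)) / Real.sqrt (L * (1 + Latt))) *
      Real.sqrt ((1 / N) * ∑ n ∈ Finset.range N, V n ^ 2) := by
  have hNr : (0 : ℝ) < N := by exact_mod_cast hN
  have hkr : (0 : ℝ) < k := by exact_mod_cast hk
  set a : ℝ := L * (1 + Latt) with ha_def
  have ha : 0 < a := by positivity
  set h : ℝ := T / N with hh_def
  have hhp : 0 < h := by positivity
  have hkey : (k : ℝ) * (T / (N * k)) = h := by
    rw [hh_def]
    field_simp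
  set w : ℝ := 1 + h * a with hw_def
  have hw1 : 1 < w := by
    have : 0 < h * a := by positivity
    linarith
  have hw0 : 0 ≤ w := by linarith
  have hrec' : ∀ n < N, E (n + 1) ≤ w * E n + h * |V n| := by
    intro n hn
    have := hrec n hn
    rw [show (1 + (k : ℝ) * (T / (N * k)) * L * (1 + Latt)) = w by
      rw [hw_def, ← hkey]; ring] at this
    rw [hkey] at this
    exact this
  -- unrolled recursion
  have key : ∀ n, n ≤ N → E n ≤ h * ∑ i ∈ Finset.range n, w ^ (n - 1 - i) * |V i| := by
    intro n
    induction n with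
    | zero => intro _; simp [hE0]
    | succ m ih =>
      intro hm
      have hmN : m < N := hm
      have h1 := hrec' m hmN
      have h2 := ih (le_of_lt hmN)
      have h3 : w * E m ≤ w * (h * ∑ i ∈ Finset.range m, w ^ (m - 1 - i) * |V i|) :=
        mul_le_mul_of_nonneg_left h2 hw0
      have heq : w * (h * ∑ i ∈ Finset.range m, w ^ (m - 1 - i) * |V i|) + h * |V m|
          = h * ∑ i ∈ Finset.range (m + 1), w ^ (m + 1 - 1 - i) * |V i| := by
        rw [Finset.sum_range_succ]
        simp only [Nat.add_sub_cancel, Nat.sub_self, pow_zero, one_mul]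
        rw [mul_add]
        congr 1
        rw [Finset.mul_sum, Finset.mul_sum, Finset.mul_sum]
        apply Finset.sum_congr rfl
        intro i hi
        have hi' : i < m := Finset.mem_range.mp hi
        have : m - i = (m - 1 - i) + 1 := by omega
        rw [this, pow_succ]
        ring
      calc E (m + 1) ≤ w * E m + h * |V m| := h1
        _ ≤ w * (h * ∑ i ∈ Finset.range m, w ^ (m - 1 - i) * |V i|) + h * |V m| := by
            linarith
        _ = h * ∑ i ∈ Finset.range (m + 1), w ^ (m + 1 - 1 - i) * |V i| := heq
  set C : ℝ := ∑ i ∈ Finset.range N, w ^ (N - 1 - i) * |V i| with hC_def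
  have hC0 : 0 ≤ C := Finset.sum_nonneg fun i _ => by positivity
  set S : ℝ := ∑ n ∈ Finset.range N, V n ^ 2 with hS_def
  have hS0 : 0 ≤ S := Finset.sum_nonneg fun i _ => sq_nonneg _
  set G : ℝ := ∑ i ∈ Finset.range N, (w ^ (N - 1 - i)) ^ 2 with hG_def
  -- Cauchy-Schwarz
  have cauchy : C ^ 2 ≤ G * S := by
    have := Finset.sum_mul_sq_le_sq_mul_sq (Finset.range N)
      (fun i => w ^ (N - 1 - i)) (fun i => |V i|)
    simpa [hC_def, hG_def, hS_def, sq_abs] using this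
  -- geometric sum bound
  have hG_geom : G = ∑ j ∈ Finset.range N, (w ^ 2) ^ j := by
    rw [hG_def, ← Finset.sum_range_reflect]
    apply Finset.sum_congr rfl
    intro j hj
    rw [← pow_mul, ← pow_mul, Nat.mul_comm]
    congr 1
    have := Finset.mem_range.mp hj
    omega
  have hwN : w ^ N ≤ Real.exp (T * a) := by
    have h1 : w ≤ Real.exp (h * a) := by
      have := Real.add_one_le_exp (h * a)
      linarith
    calc w ^ N ≤ (Real.exp (h * a)) ^ N := pow_le_pow_left₀ hw0 h1 N
      _ = Real.exp (h * a * N) := by rw [← Real.exp_nat_mul]; ring_nf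
      _ = Real.exp (T * a) := by
          congr 1
          rw [hh_def]
          field_simp
  have hGbound : G ≤ Real.exp (T * a) ^ 2 / (2 * h * a) := by
    rw [hG_geom]
    have hw2 : (w : ℝ) ^ 2 ≠ 1 := by nlinarith
    rw [geom_sum_eq hw2]
    have hnum : (w ^ 2) ^ N - 1 ≤ Real.exp (T * a) ^ 2 := by
      have : (w ^ 2) ^ N = (w ^ N) ^ 2 := by rw [← pow_mul, ← pow_mul, Nat.mul_comm]
      rw [this]
      have h2 : (w ^ N) ^ 2 ≤ Real.exp (T * a) ^ 2 := by
        apply pow_le_pow_left₀ (by positivity) hwN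
      linarith
    have hden : 2 * h * a ≤ w ^ 2 - 1 := by nlinarith
    apply div_le_div₀ (by positivity) hnum (by positivity) hden
  -- final comparison
  have hEN : E N ≤ h * C := key N le_rfl
  set R : ℝ := (Real.sqrt T * Real.exp (T * a) / Real.sqrt a) * Real.sqrt ((1 / N) * S)
    with hR_def
  have hR0 : 0 ≤ R := by positivity
  have hRsq : R ^ 2 = T * Real.exp (T * a) ^ 2 / a * ((1 / N) * S) := by
    rw [hR_def, mul_pow, div_pow, mul_pow, Real.sq_sqrt hT.le, Real.sq_sqrt ha.le,
      Real.sq_sqrt (by positivity : (0:ℝ) ≤ (1 / N) * S)]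
  have hfinal : (h * C) ^ 2 ≤ R ^ 2 := by
    rw [hRsq]
    have h1 : (h * C) ^ 2 = h ^ 2 * C ^ 2 := by ring
    rw [h1]
    have h2 : h ^ 2 * C ^ 2 ≤ h ^ 2 * (G * S) :=
      mul_le_mul_of_nonneg_left cauchy (by positivity)
    have h3 : h ^ 2 * (G * S) ≤ h ^ 2 * (Real.exp (T * a) ^ 2 / (2 * h * a) * S) := by
      apply mul_le_mul_of_nonneg_left _ (by positivity)
      exact mul_le_mul_of_nonneg_right hGbound hS0
    have h4 : h ^ 2 * (Real.exp (T * a) ^ 2 / (2 * h * a) * S)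
        = (1 / 2) * (T * Real.exp (T * a) ^ 2 / a * ((1 / N) * S)) := by
      rw [hh_def]
      field_simp
    have hY : 0 ≤ T * Real.exp (T * a) ^ 2 / a * ((1 / N) * S) := by positivity
    linarith
  have hhC : h * C ≤ R := by
    have h1 : Real.sqrt ((h * C) ^ 2) ≤ Real.sqrt (R ^ 2) := Real.sqrt_le_sqrt hfinal
    rwa [Real.sqrt_sq (by positivity), Real.sqrt_sq hR0] at h1
  have hgoal : T * L * (1 + Latt) = T * a := by rw [ha_def]; ring
  rw [hgoal]
  calc E N ≤ h * C := hEN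
    _ ≤ R := hhC
end
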